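/- arXiv:2001.00037 — 2 statements merged into one kernel-verified Lean document; each statement's English description precedes it below -/
import Mathlib

section
/- Let π be a quasigraph in a 3-hypergraph H, X ⊆ V(H) with π anticonnected on X, and Q a π-solid partition of V(H) refining {X, V(H)−X}. Let γ be a quasicycle in the complement of π/Q in H/Q all of whose vertices (classes of Q used by γ*) are subsets of X. If γ has a leading hyperedge e that is redundant with respect to π and Q, then there exist vertices u, v ∈ e lying in the two distinct classes forming γ(e/Q) such that the quasigraph π + (uv)_e is anticonnected on X. -/
open Finset

variable {V : Type*} [DecidableEq V] [Fintype V]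

/-- A 3-hypergraph: a set of hyperedges, each of size 2 or 3. -/
structure Hypergraph3 (V : Type*) where
  edges : Finset (Finset V)
  card_edges : ∀ e ∈ edges, e.card = 2 ∨ e.card = 3

/-- A quasigraph assigns to each hyperedge either a 2-element subset of it or ∅. -/
def IsQuasigraph (H : Hypergraph3 V) (π : Finset V → Finset V) : Prop :=
  ∀ e ∈ H.edges, π e = ∅ ∨ (π e ⊆ e ∧ (π e).card = 2)

/-- A set `f` crosses a partition `R` if it meets at least two classes. -/
def Crosses (f : Finset V) {X : Finset V} (R : Finpartition X) : Prop :=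
  ∃ A ∈ R.parts, ∃ B ∈ R.parts, A ≠ B ∧ (f ∩ A).Nonempty ∧ (f ∩ B).Nonempty

/-- `π` is anticonnected on `X` (in `H`): every nontrivial partition of `X` is crossed by
some hyperedge whose `π`-value is empty or lies in one class. -/
def Anticonnected (H : Hypergraph3 V) (π : Finset V → Finset V) (X : Finset V) : Prop :=
  ∀ R : Finpartition X, R.parts ≠ {X} →
    ∃ f ∈ H.edges, Crosses f R ∧ (π f = ∅ ∨ ∃ C ∈ R.parts, π f ⊆ C)

/-- The graph `π*` on `V` whose edges are the pairs `π e` over used hyperedges `e`. -/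
def quasiStar (H : Hypergraph3 V) (π : Finset V → Finset V) : SimpleGraph V :=
  SimpleGraph.fromRel fun u v => ∃ e ∈ H.edges, π e = {u, v}

/-- `π` is connected on `X`: the subgraph of `π*` induced on `X` is connected. -/
def ConnectedOn (H : Hypergraph3 V) (π : Finset V → Finset V) (X : Finset V) : Prop :=
  ((quasiStar H π).induce (↑X : Set V)).Connected

/-- The hypergraph `H − e`. -/
def Hypergraph3.erase (H : Hypergraph3 V) (e : Finset V) : Hypergraph3 V :=
  ⟨H.edges.erase e, fun f hf => H.card_edges f (Finset.mem_of_mem_erase hf)⟩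

/-!
Fix `u ∈ e ∩ Qs (k - 1)`, `v ∈ e ∩ Qs 0` and a nontrivial partition `R` of `X`. A hyperedge other
than `e` that witnesses anticonnectivity of `π` for `R` also witnesses it for `π + (uv)_e`.
Otherwise, redundancy of `e` forces every class of `Q` inside `X` into a single class of `R`.
Then no hyperedge of the quasicycle crosses `R`: its `π`-value lies in a class of `Q`, and that
class cannot avoid `X`, because a hyperedge crossing `R` has two vertices in `X` and at most three
in all. Hence `Qs 0, …, Qs (k - 1)` lie in one class `D` of `R`, the witness for `R` given by
anticonnectivity of `π` on `X` must be `e`, and `{u, v} ⊆ D` makes `e` a witness for `π + (uv)_e`.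
-/

def IsUnsplit {X : Finset V} (π : Finset V → Finset V) (R : Finpartition X) (f : Finset V) :
    Prop :=
  π f = ∅ ∨ ∃ C ∈ R.parts, π f ⊆ C

section

omit [Fintype V]

variable {X A : Finset V} {R : Finpartition X}

lemma exists_eq_inter_of_mem_restrict_parts (hA : A ⊆ X) {p : Finset V}
    (hp : p ∈ (R.restrict hA).parts) : ∃ B ∈ R.parts, p = B ∩ A := by
  obtain ⟨B, hB, rfl⟩ := mem_image.1 (mem_erase.1 hp).2
  exact ⟨B, hB, rfl⟩

lemma exists_subset_of_restrict_parts_eq (hA : A ⊆ X) (h : (R.restrict hA).parts = {A}) :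
    ∃ D ∈ R.parts, A ⊆ D := by
  obtain ⟨B, hB, hAB⟩ := exists_eq_inter_of_mem_restrict_parts hA (h ▸ mem_singleton_self A)
  exact ⟨B, hB, hAB.le.trans inter_subset_left⟩

lemma Crosses.of_restrict (hA : A ⊆ X) {f : Finset V} (h : Crosses f (R.restrict hA)) :
    Crosses f R := by
  obtain ⟨p, hp, q, hq, hpq, hfp, hfq⟩ := h
  obtain ⟨B, hB, rfl⟩ := exists_eq_inter_of_mem_restrict_parts hA hp
  obtain ⟨C, hC, rfl⟩ := exists_eq_inter_of_mem_restrict_parts hA hq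
  exact ⟨B, hB, C, hC, fun hBC => hpq (hBC ▸ rfl),
    hfp.mono (inter_subset_inter_left inter_subset_left),
    hfq.mono (inter_subset_inter_left inter_subset_left)⟩

lemma IsUnsplit.of_restrict (hA : A ⊆ X) {π : Finset V → Finset V} {f : Finset V}
    (h : IsUnsplit π (R.restrict hA) f) : IsUnsplit π R f := by
  rcases h with hempty | ⟨C, hC, hsub⟩
  · exact Or.inl hempty
  · obtain ⟨B, hB, rfl⟩ := exists_eq_inter_of_mem_restrict_parts hA hC
    exact Or.inr ⟨B, hB, hsub.trans inter_subset_left⟩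

lemma Anticonnected.exists_subset_of_forall_not {H : Hypergraph3 V} {π : Finset V → Finset V}
    (hanti : Anticonnected H π A) (hA : A ⊆ X)
    (hR : ¬ ∃ f ∈ H.edges, Crosses f R ∧ IsUnsplit π R f) : ∃ D ∈ R.parts, A ⊆ D := by
  by_contra hsplit
  obtain ⟨f, hf, hcross, hun⟩ :=
    hanti (R.restrict hA) fun h => hsplit (exists_subset_of_restrict_parts_eq hA h)
  exact hR ⟨f, hf, hcross.of_restrict hA, IsUnsplit.of_restrict hA hun⟩

lemma Crosses.one_lt_card_inter {f : Finset V} (h : Crosses f R) : 1 < (f ∩ X).card := by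
  obtain ⟨B, hB, C, hC, hBC, ⟨a, ha⟩, ⟨b, hb⟩⟩ := h
  rw [mem_inter] at ha hb
  refine one_lt_card_iff.2 ⟨a, b, mem_inter.2 ⟨ha.1, R.le hB ha.2⟩,
    mem_inter.2 ⟨hb.1, R.le hC hb.2⟩, ?_⟩
  rintro rfl
  exact disjoint_left.1 (R.disjoint hB hC hBC) ha.2 hb.2

lemma IsUnsplit.of_refines {Y : Finset V} {Q : Finpartition Y} {H : Hypergraph3 V}
    {π : Finset V → Finset V} {h : Finset V} (hπ : IsQuasigraph H π) (hh : h ∈ H.edges)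
    (hQ : IsUnsplit π Q h) (hrefine : ∀ C ∈ Q.parts, C ⊆ X ∨ C ∩ X = ∅)
    (hQR : ∀ C ∈ Q.parts, C ⊆ X → ∃ D ∈ R.parts, C ⊆ D) (hcross : Crosses h R) :
    IsUnsplit π R h := by
  rcases hQ with hempty | ⟨C, hC, hsub⟩
  · exact Or.inl hempty
  rcases hπ h hh with hempty | ⟨hπh, hcard⟩
  · exact Or.inl hempty
  rcases hrefine C hC with hCX | hCX
  · obtain ⟨D, hD, hCD⟩ := hQR C hC hCX
    exact Or.inr ⟨D, hD, hsub.trans hCD⟩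
  · have hle : h.card < (π h).card + (h ∩ X).card := by
      have := hcross.one_lt_card_inter
      rcases H.card_edges h hh with _ | _ <;> omega
    obtain ⟨x, hx⟩ := inter_nonempty_of_card_lt_card_add_card hπh inter_subset_left hle
    rw [mem_inter, mem_inter] at hx
    have hxCX : x ∈ C ∩ X := mem_inter.2 ⟨hsub hx.1, hx.2.2⟩
    simp [hCX] at hxCX

lemma eq_of_not_crosses {f D D' : Finset V} (hf : ¬ Crosses f R) (hD : D ∈ R.parts)
    (hD' : D' ∈ R.parts) (h : (f ∩ D).Nonempty) (h' : (f ∩ D').Nonempty) : D = D' :=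
  by_contra fun hne => hf ⟨D, hD, D', hD', hne, h, h'⟩

lemma subset_of_chain {D : Finset V} (hD : D ∈ R.parts) {Qs : ℕ → Finset V} {k : ℕ}
    (hQs : ∀ i < k, ∃ D ∈ R.parts, Qs i ⊆ D)
    (hlink : ∀ j, 1 ≤ j → j < k →
      ∃ h, ¬ Crosses h R ∧ (h ∩ Qs (j - 1)).Nonempty ∧ (h ∩ Qs j).Nonempty)
    (h0 : Qs 0 ⊆ D) : ∀ i < k, Qs i ⊆ D := by
  intro i
  induction i with
  | zero => exact fun _ => h0
  | succ i ih =>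
    intro hi
    obtain ⟨D', hD', hsub⟩ := hQs (i + 1) hi
    obtain ⟨h, hcross, hprev, hnext⟩ := hlink (i + 1) (by omega) hi
    rw [Nat.add_sub_cancel] at hprev
    rwa [eq_of_not_crosses hcross hD hD' (hprev.mono (inter_subset_inter_left (ih (by omega))))
      (hnext.mono (inter_subset_inter_left hsub))]

end

theorem qc_addition_general
    (H : Hypergraph3 V) (π : Finset V → Finset V) (hπ : IsQuasigraph H π)
    (X : Finset V) (hX : Anticonnected H π X)
    (Q : Finpartition (Finset.univ : Finset V))
    (hrefine : ∀ A ∈ Q.parts, A ⊆ X ∨ A ∩ X = ∅)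
    -- the quasicycle γ, with consecutive vertices Qs 0, ..., Qs (k-1), all subsets of X
    (k : ℕ) (hk : 3 ≤ k) (Qs : ℕ → Finset V)
    (hQmem : ∀ i < k, Qs i ∈ Q.parts)
    (hQsub : ∀ i < k, Qs i ⊆ X)
    (e : Finset V)
    (hcyc : ∀ j, 1 ≤ j → j < k →
      ∃ h ∈ H.edges, h ≠ e ∧ (h ∩ Qs (j - 1)).Nonempty ∧ (h ∩ Qs j).Nonempty ∧
        (π h = ∅ ∨ ∃ C ∈ Q.parts, π h ⊆ C))
    -- the leading hyperedge e, with γ(e/Q) = {Qs (k-1), Qs 0}, redundant w.r.t. π and Q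
    (he1 : (e ∩ Qs (k - 1)).Nonempty) (he2 : (e ∩ Qs 0).Nonempty)
    (hred : ∀ A ∈ Q.parts, Anticonnected (H.erase e) π A) :
    ∃ u ∈ e ∩ Qs (k - 1), ∃ v ∈ e ∩ Qs 0,
      Anticonnected H (Function.update π e {u, v}) X := by
  obtain ⟨u, hu⟩ := he1
  obtain ⟨v, hv⟩ := he2
  refine ⟨u, hu, v, hv, fun R hR => ?_⟩
  by_cases hother : ∃ f ∈ (H.erase e).edges, Crosses f R ∧ IsUnsplit π R f
  · obtain ⟨f, hf, hcross, hun⟩ := hother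
    obtain ⟨hfe, hf⟩ := mem_erase.1 hf
    exact ⟨f, hf, hcross, by rwa [Function.update_of_ne hfe]⟩
  have hclass : ∀ A ∈ Q.parts, A ⊆ X → ∃ D ∈ R.parts, A ⊆ D := fun A hA hAX =>
    (hred A hA).exists_subset_of_forall_not hAX hother
  have hlink : ∀ j, 1 ≤ j → j < k →
      ∃ h, ¬ Crosses h R ∧ (h ∩ Qs (j - 1)).Nonempty ∧ (h ∩ Qs j).Nonempty := by
    intro j hj hjk
    obtain ⟨h, hh, hhe, hprev, hnext, hunQ⟩ := hcyc j hj hjk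
    refine ⟨h, fun hcross => hother ⟨h, mem_erase_of_ne_of_mem hhe hh, hcross, ?_⟩, hprev, hnext⟩
    exact IsUnsplit.of_refines hπ hh hunQ hrefine hclass hcross
  obtain ⟨D, hD, h0⟩ := hclass _ (hQmem 0 (by omega)) (hQsub 0 (by omega))
  have hlast : Qs (k - 1) ⊆ D := subset_of_chain hD
    (fun i hi => hclass _ (hQmem i hi) (hQsub i hi)) hlink h0 (k - 1) (by omega)
  obtain ⟨f, hf, hcross, hun⟩ := hX R hR
  obtain rfl : f = e := by
    by_contra hfe
    exact hother ⟨f, mem_erase_of_ne_of_mem hfe hf, hcross, hun⟩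
  refine ⟨f, hf, hcross, Or.inr ⟨D, hD, ?_⟩⟩
  rw [Function.update_self]
  exact insert_subset (hlast (mem_inter.1 hu).2) (singleton_subset_iff.2 (h0 (mem_inter.1 hv).2))

theorem qc_addition
    (H : Hypergraph3 V) (π : Finset V → Finset V) (hπ : IsQuasigraph H π)
    (X : Finset V) (hX : Anticonnected H π X)
    (Q : Finpartition (Finset.univ : Finset V))
    (hsolid : ∀ A ∈ Q.parts, ConnectedOn H π A ∧ Anticonnected H π A)
    (hrefine : ∀ A ∈ Q.parts, A ⊆ X ∨ A ∩ X = ∅)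
    -- the quasicycle γ, with consecutive vertices Qs 0, ..., Qs (k-1), all subsets of X
    (k : ℕ) (hk : 3 ≤ k) (Qs : ℕ → Finset V)
    (hQmem : ∀ i < k, Qs i ∈ Q.parts)
    (hQsub : ∀ i < k, Qs i ⊆ X)
    (hQinj : ∀ i < k, ∀ j < k, Qs i = Qs j → i = j)
    (e : Finset V)
    (hcyc : ∀ j, 1 ≤ j → j < k →
      ∃ h ∈ H.edges, h ≠ e ∧ (h ∩ Qs (j - 1)).Nonempty ∧ (h ∩ Qs j).Nonempty ∧
        (π h = ∅ ∨ ∃ C ∈ Q.parts, π h ⊆ C))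
    -- the leading hyperedge e, with γ(e/Q) = {Qs (k-1), Qs 0}, redundant w.r.t. π and Q
    (he : e ∈ H.edges) (heπ : π e = ∅)
    (he1 : (e ∩ Qs (k - 1)).Nonempty) (he2 : (e ∩ Qs 0).Nonempty)
    (hred : ∀ A ∈ Q.parts, Anticonnected (H.erase e) π A) :
    ∃ u ∈ e ∩ Qs (k - 1), ∃ v ∈ e ∩ Qs 0,
      Anticonnected H (Function.update π e {u, v}) X :=
  qc_addition_general H π hπ X hX Q hrefine k hk Qs hQmem hQsub e hcyc he1 he2 hred
end

section
/- Let π be a quasigraph in a 3-hypergraph H, Q a π-solid partition of V(H), and Q_1, ..., Q_k classes of Q such that for each consecutive pair Q_{j-1}, Q_j (2 ≤ j ≤ k) there is a hyperedge h_j of H distinct from a fixed hyperedge e, intersecting both Q_{j-1} and Q_j, with π(h_j) contained in Q_{j-1} or in Q_j (possibly π(h_j) = ∅). If π is anticonnected on each Q_i in H − e, then π is anticonnected on Q_1 ∪ ... ∪ Q_k in H − e. -/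
open Finset

variable {V : Type*} [DecidableEq V] [Fintype V]

/-!
Let `R` be a nontrivial partition of the union. If `R` splits some `Q_i`, anticonnectivity of
`π` on `Q_i`, applied to the restriction of `R` to `Q_i`, yields a witnessing hyperedge.
Otherwise every `Q_i` lies in a single class of `R`; since `R` is nontrivial these classes are not
all equal, so some consecutive `Q_{j-1}`, `Q_j` lie in different classes, and the linking
hyperedge `h_j` is the witness.
-/

theorem exists_pred_ne_of_ne {β : Type*} {c : ℕ → β} {i : ℕ} (h : c i ≠ c 0) :
    ∃ j, 1 ≤ j ∧ j ≤ i ∧ c (j - 1) ≠ c j := by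
  induction i with
  | zero => exact absurd rfl h
  | succ i ih =>
    by_cases hi : c i = c 0
    · exact ⟨i + 1, by omega, le_rfl, by simpa [hi] using h.symm⟩
    · obtain ⟨j, hj1, hji, hj⟩ := ih hi
      exact ⟨j, hj1, by omega, hj⟩

section

variable {α : Type*} [DecidableEq α]

theorem Finpartition.exists_ne_of_parts_ne_singleton {X A : Finset α} {R : Finpartition X}
    (hR : R.parts ≠ {X}) (hA : A ∈ R.parts) : ∃ B ∈ R.parts, B ≠ A := by
  by_contra! h
  have hparts : R.parts = {A} := eq_singleton_iff_unique_mem.2 ⟨hA, h⟩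
  have hAX : A = X := by simpa [hparts] using R.sup_parts
  exact hR (hAX ▸ hparts)

theorem Finpartition.exists_inter_eq_of_mem_restrict {X Y A' : Finset α} {R : Finpartition X}
    {hY : Y ≤ X} (hA' : A' ∈ (R.restrict hY).parts) : ∃ A ∈ R.parts, A ∩ Y = A' := by
  simpa using mem_of_mem_erase hA'

theorem Finpartition.restrict_parts_ne_singleton {X Y : Finset α} {R : Finpartition X}
    (hY : Y ≤ X) (hspread : ∀ A ∈ R.parts, ¬Y ⊆ A) : (R.restrict hY).parts ≠ {Y} := by
  intro h
  obtain ⟨A, hA, hAY⟩ :=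
    Finpartition.exists_inter_eq_of_mem_restrict (h ▸ mem_singleton_self Y)
  exact hspread A hA (hAY ▸ inter_subset_left)

theorem Crosses.of_restrict_s13 {f X Y : Finset α} {R : Finpartition X} {hY : Y ≤ X}
    (hf : Crosses f (R.restrict hY)) : Crosses f R := by
  obtain ⟨A', hA', B', hB', hne, hfA, hfB⟩ := hf
  obtain ⟨A, hA, rfl⟩ := Finpartition.exists_inter_eq_of_mem_restrict hA'
  obtain ⟨B, hB, rfl⟩ := Finpartition.exists_inter_eq_of_mem_restrict hB'
  exact ⟨A, hA, B, hB, fun h => hne (h ▸ rfl),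
    hfA.mono (inter_subset_inter_left inter_subset_left),
    hfB.mono (inter_subset_inter_left inter_subset_left)⟩

theorem Anticonnected.exists_crosses_of_not_subset_part {H : Hypergraph3 α}
    {π : Finset α → Finset α} {X Y : Finset α} (hanti : Anticonnected H π Y) (hY : Y ⊆ X)
    (R : Finpartition X) (hspread : ∀ A ∈ R.parts, ¬Y ⊆ A) :
    ∃ f ∈ H.edges, Crosses f R ∧ (π f = ∅ ∨ ∃ C ∈ R.parts, π f ⊆ C) := by
  obtain ⟨f, hf, hcross, hπf⟩ :=
    hanti (R.restrict hY) (Finpartition.restrict_parts_ne_singleton hY hspread)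
  refine ⟨f, hf, hcross.of_restrict_s13, hπf.imp_right ?_⟩
  rintro ⟨C', hC', hπC'⟩
  obtain ⟨C, hC, rfl⟩ := Finpartition.exists_inter_eq_of_mem_restrict hC'
  exact ⟨C, hC, hπC'.trans inter_subset_left⟩

theorem Finpartition.exists_pred_ne_of_subset_parts {k : ℕ}
    (hk : 1 ≤ k) {Qs : ℕ → Finset α} {R : Finpartition ((range k).biUnion Qs)}
    (hR : R.parts ≠ {(range k).biUnion Qs}) {c : ℕ → Finset α} (hc : ∀ i < k, c i ∈ R.parts)
    (hQc : ∀ i < k, Qs i ⊆ c i) : ∃ j, 1 ≤ j ∧ j < k ∧ c (j - 1) ≠ c j := by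
  obtain ⟨B, hB, hBne⟩ := R.exists_ne_of_parts_ne_singleton hR (hc 0 hk)
  obtain ⟨x, hxB⟩ := R.nonempty_of_mem_parts hB
  obtain ⟨i, hi, hxi⟩ := mem_biUnion.1 (R.subset hB hxB)
  have hik : i < k := mem_range.1 hi
  have hci : c i = B := R.eq_of_mem_parts (hc i hik) hB (hQc i hik hxi) hxB
  obtain ⟨j, hj1, hji, hj⟩ := exists_pred_ne_of_ne (hci ▸ hBne)
  exact ⟨j, hj1, by omega, hj⟩

end

theorem chain_anticonnected_general
    (H : Hypergraph3 V) (π : Finset V → Finset V)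
    (k : ℕ) (hk : 1 ≤ k) (Qs : ℕ → Finset V)
    (e : Finset V)
    (hchain : ∀ j, 1 ≤ j → j < k →
      ∃ h ∈ H.edges, h ≠ e ∧ (h ∩ Qs (j - 1)).Nonempty ∧ (h ∩ Qs j).Nonempty ∧
        (π h = ∅ ∨ π h ⊆ Qs (j - 1) ∨ π h ⊆ Qs j))
    (hanti : ∀ i < k, Anticonnected (H.erase e) π (Qs i)) :
    Anticonnected (H.erase e) π ((Finset.range k).biUnion Qs) := by
  intro R hR
  by_cases hcase : ∀ i < k, ∃ A ∈ R.parts, Qs i ⊆ A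
  · choose! c hcR hQc using hcase
    obtain ⟨j, hj1, hjk, hcj⟩ := R.exists_pred_ne_of_subset_parts hk hR hcR hQc
    have hjk' : j - 1 < k := by omega
    obtain ⟨h, hH, hhe, hprev, hcur, hπh⟩ := hchain j hj1 hjk
    refine ⟨h, mem_erase.2 ⟨hhe, hH⟩, ⟨c (j - 1), hcR _ hjk', c j, hcR _ hjk, hcj,
      hprev.mono (inter_subset_inter_left (hQc _ hjk')),
      hcur.mono (inter_subset_inter_left (hQc _ hjk))⟩, ?_⟩
    rcases hπh with hempty | hsub | hsub
    · exact Or.inl hempty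
    · exact Or.inr ⟨c (j - 1), hcR _ hjk', hsub.trans (hQc _ hjk')⟩
    · exact Or.inr ⟨c j, hcR _ hjk, hsub.trans (hQc _ hjk)⟩
  · push Not at hcase
    obtain ⟨i, hik, hspread⟩ := hcase
    exact (hanti i hik).exists_crosses_of_not_subset_part
      (subset_biUnion_of_mem Qs (mem_range.2 hik)) R hspread

theorem chain_anticonnected
    (H : Hypergraph3 V) (π : Finset V → Finset V) (hπ : IsQuasigraph H π)
    (Q : Finpartition (Finset.univ : Finset V))
    (hsolid : ∀ A ∈ Q.parts, ConnectedOn H π A ∧ Anticonnected H π A)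
    (k : ℕ) (hk : 1 ≤ k) (Qs : ℕ → Finset V)
    (hQmem : ∀ i < k, Qs i ∈ Q.parts)
    (e : Finset V)
    (hchain : ∀ j, 1 ≤ j → j < k →
      ∃ h ∈ H.edges, h ≠ e ∧ (h ∩ Qs (j - 1)).Nonempty ∧ (h ∩ Qs j).Nonempty ∧
        (π h = ∅ ∨ π h ⊆ Qs (j - 1) ∨ π h ⊆ Qs j))
    (hanti : ∀ i < k, Anticonnected (H.erase e) π (Qs i)) :
    Anticonnected (H.erase e) π ((Finset.range k).biUnion Qs) :=
  chain_anticonnected_general H π k hk Qs e hchain hanti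
end
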